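/- Let c : ℕ → ℕ take only odd values, let (m,k,·) be admissible coordinates for X_c (i.e., m = 0 and k = 0, or m ≥ 1 and k ≤ c(m−1)), let t be a finite binary string and y ∈ 2^ℕ. Then the two vertices (m, k, t^⌢(0)^⌢y) and (m, k, t^⌢(1)^⌢y) of X_c lie in the same connected component of 𝕃_c and are at odd graph distance from each other in 𝕃_c. -/
import Mathlib


open MeasureTheory

/-- A walk of length `m` in the graph given by the relation `Adj`. -/
def IsWalk {α : Type*} (Adj : α → α → Prop) (m : ℕ) (w : ℕ → α) : Prop :=
  ∀ j, j < m → Adj (w j) (w (j + 1))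

/-- The set of lengths of walks from `u` to `v`. -/
def walkLens {α : Type*} (Adj : α → α → Prop) (u v : α) : Set ℕ :=
  {m | ∃ w : ℕ → α, w 0 = u ∧ w m = v ∧ IsWalk Adj m w}

/-- `Φ(A,k)`: every odd-length walk in `G` with both endpoints in `A`
has length at most `2k - 1`. -/
def PhiProp {X : Type*} (G : X → X → Prop) (A : Set X) (k : ℕ) : Prop :=
  ∀ (m : ℕ) (w : ℕ → X), Odd m → IsWalk G m w → w 0 ∈ A → w m ∈ A → m ≤ 2 * k - 1

/-- The endpoint `e_i^n = (p_0)^⌢(0)^{n-1}⌢(i)` of the finite path `L^c_n`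
(vertices of `L^c_n` are coded as lists of naturals, the head being the
index `k` of `p_k` and the tail being a binary string). -/
def pathEnd : ℕ → ℕ → List ℕ
  | 0, _ => [0]
  | m + 1, i => 0 :: (List.replicate m 0 ++ [i])

/-- The vertex set of the finite path `L^c_n`. -/
def LVerts (c : ℕ → ℕ) : ℕ → Set (List ℕ)
  | 0 => {[0]}
  | n + 1 =>
      ((fun v => v ++ [0]) '' LVerts c n) ∪ ((fun v => v ++ [1]) '' LVerts c n) ∪
        {v | ∃ k ≤ c n, v = [k]}

/-- The edge set of the finite path `L^c_n` (as a set of ordered pairs,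
one orientation for each edge): `L^c_{n+1}` consists of two relabelled copies
of `L^c_n` joined by the path `(e_1^n)^⌢(0), p_0, …, p_{c(n)}, (e_1^n)^⌢(1)`. -/
def LEdges (c : ℕ → ℕ) : ℕ → Set (List ℕ × List ℕ)
  | 0 => ∅
  | n + 1 =>
      {e | ∃ u v, (u, v) ∈ LEdges c n ∧ ∃ i ≤ 1, e = (u ++ [i], v ++ [i])} ∪
      {(pathEnd n 1 ++ [0], [0]), ([c n], pathEnd n 1 ++ [1])} ∪
      {e | ∃ j, j < c n ∧ e = ([j], [j + 1])}

/-- The (symmetric) adjacency relation of `L^c_n`. -/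
def LAdj (c : ℕ → ℕ) (n : ℕ) (u v : List ℕ) : Prop :=
  (u, v) ∈ LEdges c n ∨ (v, u) ∈ LEdges c n

/-- The Polish space `X_c ⊆ ℕ × ℕ × 2^ℕ` of vertices of `𝕃_c`. -/
def Xc (c : ℕ → ℕ) : Set (ℕ × ℕ × (ℕ → Bool)) :=
  {p | (p.1 = 0 ∧ p.2.1 = 0) ∨ (1 ≤ p.1 ∧ p.2.1 ≤ c (p.1 - 1))}

/-- `π_n(m,k,x) = (p_k)^⌢(x↾(n-m))`, a vertex of `L^c_n` (for `n ≥ m`). -/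
def piProj (m k : ℕ) (x : ℕ → Bool) (n : ℕ) : List ℕ :=
  k :: List.ofFn (fun j : Fin (n - m) => cond (x j.val) 1 0)

/-- Adjacency in `𝕃_c`: the projections are adjacent in `L^c_n` for every
`n ≥ max` of the first coordinates. -/
def LcAdj (c : ℕ → ℕ) (p q : ℕ × ℕ × (ℕ → Bool)) : Prop :=
  ∀ n, max p.1 q.1 ≤ n → LAdj c n (piProj p.1 p.2.1 p.2.2 n) (piProj q.1 q.2.1 q.2.2 n)

/-- Concatenation `t^⌢x` of a finite binary string with an infinite one. -/
def catSeq (t : List Bool) (x : ℕ → Bool) : ℕ → Bool :=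
  fun j => if h : j < t.length then t.get ⟨j, h⟩ else x (j - t.length)

section Aux
variable {α β : Type*} {A : α → α → Prop} {B : β → β → Prop}

lemma walkLens_zero (x : α) : 0 ∈ walkLens A x x :=
  ⟨fun _ => x, rfl, rfl, fun j hj => absurd hj (by omega)⟩

lemma walkLens_single {x y : α} (h : A x y) : 1 ∈ walkLens A x y := by
  refine ⟨fun j => if j = 0 then x else y, by simp, by simp, fun j hj => ?_⟩
  have : j = 0 := by omega
  subst this; simpa using h

lemma walkLens_trans {a b : ℕ} {x y z : α} (ha : a ∈ walkLens A x y)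
    (hb : b ∈ walkLens A y z) : a + b ∈ walkLens A x z := by
  obtain ⟨w1, h10, h1a, h1w⟩ := ha
  obtain ⟨w2, h20, h2b, h2w⟩ := hb
  refine ⟨fun j => if j < a then w1 j else w2 (j - a), ?_, ?_, ?_⟩
  · show (if 0 < a then w1 0 else w2 (0 - a)) = x
    by_cases h : 0 < a
    · simp [h, h10]
    · have ha0 : a = 0 := by omega
      subst ha0
      rw [if_neg h]
      show w2 0 = x
      rw [h20, ← h1a, h10]
  · show (if a + b < a then w1 (a+b) else w2 (a + b - a)) = z
    have h : ¬ (a + b < a) := by omega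
    simp [h, h2b]
  · intro j hj
    show A (if j < a then w1 j else w2 (j - a)) (if j + 1 < a then w1 (j+1) else w2 (j + 1 - a))
    by_cases h1 : j + 1 < a
    · have h2 : j < a := by omega
      simpa [h1, h2] using h1w j (by omega)
    · by_cases h2 : j < a
      · have hja : j + 1 - a = 0 := by omega
        have hja' : a = j + 1 := by omega
        rw [if_pos h2, if_neg h1, hja, h20, ← h1a, hja']
        exact h1w j (by omega)
      · have e1 : j + 1 - a = (j - a) + 1 := by omega
        rw [if_neg h1, if_neg h2, e1]
        exact h2w (j - a) (by omega)

lemma walkLens_symm (hA : ∀ x y, A x y → A y x) {a : ℕ} {x y : α}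
    (ha : a ∈ walkLens A x y) : a ∈ walkLens A y x := by
  obtain ⟨w, h0, hae, hw⟩ := ha
  refine ⟨fun j => w (a - j), by simpa, by simpa, fun j hj => ?_⟩
  show A (w (a - j)) (w (a - (j+1)))
  have e1 : a - j - 1 + 1 = a - j := by omega
  have e2 : a - (j+1) = a - j - 1 := by omega
  rw [e2]
  exact hA _ _ (by simpa [e1] using hw (a - j - 1) (by omega))

lemma walkLens_map {f : α → β} (hf : ∀ x y, A x y → B (f x) (f y)) {a : ℕ} {x y : α}
    (ha : a ∈ walkLens A x y) : a ∈ walkLens B (f x) (f y) := by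
  obtain ⟨w, h0, hae, hw⟩ := ha
  exact ⟨fun j => f (w j), by show f (w 0) = f x; rw [h0],
    by show f (w a) = f y; rw [hae], fun j hj => hf _ _ (hw j hj)⟩

end Aux
/-- binary list from bool list -/
def nb (s : List Bool) : List ℕ := s.map (fun b => cond b 1 0)

def bools (l : List ℕ) : List Bool := l.map (fun a => a == 1)

lemma bools_nb (s : List Bool) : bools (nb s) = s := by
  induction s with
  | nil => rfl
  | cons b s ih => cases b <;> simp [nb, bools] at ih ⊢ <;> simpa [nb, bools] using ih

lemma nb_bools (l : List ℕ) (h : ∀ a ∈ l, a ≤ 1) : nb (bools l) = l := by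
  induction l with
  | nil => rfl
  | cons a l ih =>
    have ha : a ≤ 1 := h a (by simp)
    interval_cases a <;>
      simp [nb, bools] at ih ⊢ <;> exact ih (fun x hx => h x (by simp [hx]))

def eps (m : ℕ) : ZMod 2 := if m = 1 then 1 else 0

/-- parity coloring of vertices of `L^c_n` -/
def chi (n : ℕ) (u : List ℕ) : ZMod 2 :=
  (u.headI : ZMod 2) + ((u.tail.sum : ℕ) : ZMod 2) + eps (n + 1 - u.length)

/-- admissibility of a vertex of `L^c_n` -/
def good (c : ℕ → ℕ) (n : ℕ) (u : List ℕ) : Prop :=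
  u ≠ [] ∧ u.length ≤ n + 1 ∧ (∀ a ∈ u.tail, a ≤ 1) ∧
    (u.length = n + 1 → u.headI = 0) ∧ (u.length ≤ n → u.headI ≤ c (n - u.length))

lemma chi_append {u : List ℕ} (hu : u ≠ []) (n i : ℕ) :
    chi (n + 1) (u ++ [i]) = chi n u + (i : ZMod 2) := by
  obtain ⟨a, u', rfl⟩ := List.exists_cons_of_ne_nil hu
  simp only [chi, List.cons_append, List.headI_cons, List.tail_cons, List.sum_append,
    List.sum_cons, List.sum_nil, List.length_cons, List.length_append, List.length_singleton,
    List.length_nil]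
  have e : n + 1 + 1 - (u'.length + (0 + 1) + 1) = n + 1 - (u'.length + 1) := by omega
  rw [e]
  push_cast
  ring

lemma good_append {c : ℕ → ℕ} {n : ℕ} {u : List ℕ} (hg : good c n u) {i : ℕ} (hi : i ≤ 1) :
    good c (n + 1) (u ++ [i]) := by
  obtain ⟨hne, hlen, hbin, hhd1, hhd2⟩ := hg
  obtain ⟨a, u', rfl⟩ := List.exists_cons_of_ne_nil hne
  simp only [List.length_cons] at hlen
  refine ⟨by simp, by simp only [List.cons_append, List.length_cons, List.length_append,
    List.length_singleton, List.length_nil]; omega, ?_, ?_, ?_⟩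
  · intro x hx
    simp only [List.cons_append, List.tail_cons, List.mem_append, List.mem_singleton] at hx
    rcases hx with hx | rfl
    · exact hbin x (by simpa using hx)
    · exact hi
  · intro hl
    simp only [List.cons_append, List.length_cons, List.length_append,
      List.length_singleton, List.length_nil, List.headI_cons] at hl ⊢
    have := hhd1 (by simp only [List.length_cons]; omega)
    simpa using this
  · intro hl
    simp only [List.cons_append, List.length_cons, List.length_append,
      List.length_singleton, List.length_nil, List.headI_cons] at hl ⊢
    have hle : (a :: u').length ≤ n := by simp only [List.length_cons]; omega
    have h2 := hhd2 hle
    simp only [List.length_cons, List.headI_cons] at h2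
    have e : n + 1 - (u'.length + (0 + 1) + 1) = n - (u'.length + 1) := by omega
    rw [e]
    exact h2

lemma pathEnd_succ (n i : ℕ) : pathEnd (n + 1) i = pathEnd n 0 ++ [i] := by
  cases n with
  | zero => simp [pathEnd]
  | succ m => simp [pathEnd, List.replicate_succ']

lemma pathEnd_length (n i : ℕ) : (pathEnd n i).length = n + 1 := by
  cases n <;> simp [pathEnd]

lemma pathEnd_headI (n i : ℕ) : (pathEnd n i).headI = 0 := by
  cases n <;> simp [pathEnd]

lemma pathEnd_tail_bin (n i : ℕ) (hi : i ≤ 1) : ∀ a ∈ (pathEnd n i).tail, a ≤ 1 := by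
  cases n with
  | zero => simp [pathEnd]
  | succ m =>
    intro a ha
    simp only [pathEnd, List.tail_cons, List.mem_append, List.mem_singleton,
      List.mem_replicate] at ha
    rcases ha with ⟨-, rfl⟩ | rfl
    · omega
    · exact hi

lemma pathEnd_ne_nil (n i : ℕ) : pathEnd n i ≠ [] := by
  cases n <;> simp [pathEnd]

lemma chi_pathEnd_one (n : ℕ) : chi n (pathEnd n 1) = if n = 0 then 0 else 1 := by
  cases n with
  | zero => simp [chi, pathEnd, eps]
  | succ m =>
    simp [chi, pathEnd, eps, List.sum_replicate]
lemma odd_cast_zmod2 {a : ℕ} (h : Odd a) : (a : ZMod 2) = 1 := by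
  rw [← ZMod.natCast_mod a 2, Nat.odd_iff.mp h]
  rfl

lemma good_pathEnd (c : ℕ → ℕ) (n : ℕ) : good c n (pathEnd n 1) := by
  refine ⟨pathEnd_ne_nil n 1, by rw [pathEnd_length], pathEnd_tail_bin n 1 le_rfl,
    fun _ => pathEnd_headI n 1, fun h => ?_⟩
  rw [pathEnd_length] at h
  omega

lemma good_singleton {c : ℕ → ℕ} {n j : ℕ} (hj : j ≤ c n) : good c (n + 1) [j] := by
  refine ⟨by simp, by simp, by simp, fun h => by simp at h, fun _ => ?_⟩
  simpa using hj

lemma chi_singleton (n j : ℕ) : chi (n + 1) [j] = (j : ZMod 2) + eps (n + 1) := by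
  simp [chi]

lemma edge_props {c : ℕ → ℕ} (hodd : ∀ n, Odd (c n)) :
    ∀ {n u v}, (u, v) ∈ LEdges c n → good c n u ∧ good c n v ∧ chi n u ≠ chi n v := by
  intro n
  induction n with
  | zero => intro u v h; simp [LEdges] at h
  | succ n ih =>
    intro u v h
    rcases h with (⟨u', v', he, i, hi, heq⟩ | hpair) | ⟨j, hj, heq⟩
    · obtain ⟨hgu, hgv, hchi⟩ := ih he
      rw [Prod.ext_iff] at heq
      obtain ⟨rfl, rfl⟩ := heq
      refine ⟨good_append hgu hi, good_append hgv hi, ?_⟩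
      rw [chi_append hgu.1, chi_append hgv.1]
      intro hc
      exact hchi (by exact add_right_cancel hc)
    · simp only [Set.mem_insert_iff, Set.mem_singleton_iff] at hpair
      rcases hpair with heq | heq <;> rw [Prod.ext_iff] at heq <;> obtain ⟨rfl, rfl⟩ := heq
      · refine ⟨good_append (good_pathEnd c n) (by omega), good_singleton (Nat.zero_le _), ?_⟩
        rw [chi_append (pathEnd_ne_nil n 1), chi_singleton, chi_pathEnd_one]
        rcases Nat.eq_zero_or_pos n with rfl | hn
        · norm_num [eps]
        · have h1 : ¬ (n = 0) := by omega
          have h2 : ¬ (n + 1 = 1) := by omega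
          simp only [h1, if_false, eps, h2]
          intro hc
          revert hc; decide
      · refine ⟨good_singleton le_rfl, good_append (good_pathEnd c n) le_rfl, ?_⟩
        rw [chi_append (pathEnd_ne_nil n 1), chi_singleton, chi_pathEnd_one,
          odd_cast_zmod2 (hodd n)]
        rcases Nat.eq_zero_or_pos n with rfl | hn
        · norm_num [eps]
          intro hc
          revert hc; decide
        · have h1 : ¬ (n = 0) := by omega
          have h2 : ¬ (n + 1 = 1) := by omega
          simp only [h1, if_false, eps, h2]
          intro hc
          revert hc; decide
    · rw [Prod.ext_iff] at heq
      obtain ⟨rfl, rfl⟩ := heq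
      refine ⟨good_singleton (by omega), good_singleton (by omega), ?_⟩
      rw [chi_singleton, chi_singleton]
      intro hc
      have h2 : ((j : ZMod 2)) = ((j + 1 : ℕ) : ZMod 2) := by
        have := add_right_cancel hc
        exact this
      rw [← ZMod.natCast_mod j 2, ← ZMod.natCast_mod (j+1) 2] at h2
      rcases Nat.even_or_odd j with he | ho
      · rw [Nat.even_iff.mp he, show (j+1)%2 = 1 from by have := Nat.even_iff.mp he; omega] at h2
        exact absurd h2 (by decide)
      · rw [Nat.odd_iff.mp ho, show (j+1)%2 = 0 from by have := Nat.odd_iff.mp ho; omega] at h2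
        exact absurd h2 (by decide)
lemma copy_edge {c : ℕ → ℕ} {n : ℕ} {u v : List ℕ} (h : (u, v) ∈ LEdges c n)
    {i : ℕ} (hi : i ≤ 1) : (u ++ [i], v ++ [i]) ∈ LEdges c (n + 1) :=
  Or.inl (Or.inl ⟨u, v, h, i, hi, rfl⟩)

lemma trunc_edge {c : ℕ → ℕ} {n : ℕ} {u v : List ℕ} (h : (u, v) ∈ LEdges c (n + 1))
    (hu : 2 ≤ u.length) (hv : 2 ≤ v.length) :
    ∃ u' v' i, i ≤ 1 ∧ (u', v') ∈ LEdges c n ∧ u = u' ++ [i] ∧ v = v' ++ [i] := by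
  rcases h with (⟨u', v', he, i, hi, heq⟩ | hpair) | ⟨j, hj, heq⟩
  · rw [Prod.ext_iff] at heq
    exact ⟨u', v', i, hi, he, heq.1, heq.2⟩
  · simp only [Set.mem_insert_iff, Set.mem_singleton_iff] at hpair
    rcases hpair with heq | heq <;> rw [Prod.ext_iff] at heq <;>
      obtain ⟨rfl, rfl⟩ := heq
    · simp at hv
    · simp at hu
  · rw [Prod.ext_iff] at heq
    obtain ⟨rfl, rfl⟩ := heq
    simp at hu

lemma trunc_many {c : ℕ → ℕ} : ∀ (d : ℕ) {N : ℕ} {u v : List ℕ},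
    (u, v) ∈ LEdges c N → d + 1 ≤ u.length → d + 1 ≤ v.length → d ≤ N →
    (u.take (u.length - d), v.take (v.length - d)) ∈ LEdges c (N - d) := by
  intro d
  induction d with
  | zero => intro N u v h _ _ _; simpa [List.take_length] using h
  | succ d ih =>
    intro N u v h hu hv hdN
    obtain ⟨N', rfl⟩ : ∃ N', N = N' + 1 := ⟨N - 1, by omega⟩
    obtain ⟨u', v', i, hi, he, rfl, rfl⟩ := trunc_edge h (by omega) (by omega)
    simp only [List.length_append, List.length_singleton] at hu hv ⊢
    have e1 : u'.length + 1 - (d + 1) = u'.length - d := by omega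
    have e2 : v'.length + 1 - (d + 1) = v'.length - d := by omega
    have e3 : N' + 1 - (d + 1) = N' - d := by omega
    rw [e1, e2, e3, List.take_append_of_le_length (by omega),
      List.take_append_of_le_length (by omega)]
    exact ih he (by omega) (by omega) (by omega)

lemma copy_many {c : ℕ → ℕ} {N : ℕ} {u v : List ℕ} (h : (u, v) ∈ LEdges c N) (z : ℕ → Bool) :
    ∀ d : ℕ, (u ++ List.ofFn (fun j : Fin d => cond (z j.val) 1 0),
      v ++ List.ofFn (fun j : Fin d => cond (z j.val) 1 0)) ∈ LEdges c (N + d) := by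
  intro d
  induction d with
  | zero => simpa using h
  | succ d ih =>
    rw [List.ofFn_succ']
    simp only [List.concat_eq_append, ← List.append_assoc, Fin.coe_castSucc, Fin.val_last]
    exact copy_edge ih (by cases z d <;> simp)

lemma piProj_cat (m k d : ℕ) (s : List Bool) (z : ℕ → Bool) :
    piProj m k (catSeq s z) (m + (s.length + d)) =
      k :: (nb s ++ List.ofFn fun j : Fin d => cond (z j.val) 1 0) := by
  unfold piProj
  congr 1
  apply List.ext_getElem
  · simp only [List.length_ofFn, List.length_cons, List.length_append, nb,
      List.length_map, List.length_take]
    omega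
  · intro i h1 h2
    simp only [List.length_ofFn] at h1
    have hi : i < s.length + d := by omega
    rw [List.getElem_ofFn]
    by_cases hc : i < s.length
    · rw [List.getElem_append_left (by simpa [nb] using hc)]
      simp only [nb, List.getElem_map]
      have : catSeq s z i = s[i] := by
        simp [catSeq, hc]
      rw [this]
    · rw [List.getElem_append_right (by simpa [nb] using hc)]
      simp only [List.getElem_ofFn]
      have : catSeq s z i = z (i - s.length) := by
        simp [catSeq, hc]
      rw [this]
      congr 1
      simp [nb]

lemma piProj_take (m k e : ℕ) (s : List Bool) (z : ℕ → Bool) (he : e ≤ s.length) :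
    piProj m k (catSeq s z) (m + e) = k :: nb (s.take e) := by
  unfold piProj
  congr 1
  apply List.ext_getElem
  · simp only [List.length_ofFn, List.length_cons, List.length_append, nb,
      List.length_map, List.length_take]
    omega
  · intro i h1 h2
    simp only [List.length_ofFn] at h1
    have hi : i < e := by omega
    rw [List.getElem_ofFn]
    simp only [nb, List.getElem_map, List.getElem_take]
    have : catSeq s z i = s[i] := by
      simp [catSeq, show i < s.length by omega]
    rw [this]
/-- the point of `X_c` obtained from a vertex of `L^c_N` by appending the tail `z` -/
def Pt (N : ℕ) (z : ℕ → Bool) (u : List ℕ) : ℕ × ℕ × (ℕ → Bool) :=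
  (N + 1 - u.length, u.headI, catSeq (bools u.tail) z)

lemma good_mem_Xc {c : ℕ → ℕ} {N : ℕ} {u : List ℕ} (z : ℕ → Bool) (hg : good c N u) :
    Pt N z u ∈ Xc c := by
  obtain ⟨hne, hlen, hbin, hhd1, hhd2⟩ := hg
  by_cases h : u.length = N + 1
  · left
    exact ⟨by simp [Pt, h], by simp [Pt, hhd1 h]⟩
  · right
    have hle : u.length ≤ N := by omega
    have h1 : 1 ≤ u.length := by
      cases u with
      | nil => exact absurd rfl hne
      | cons a l => simp
    refine ⟨by simp only [Pt]; omega, ?_⟩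
    have e : N + 1 - u.length - 1 = N - u.length := by omega
    simpa [Pt, e] using hhd2 hle

lemma LcAdj_symm {c : ℕ → ℕ} {p q : ℕ × ℕ × (ℕ → Bool)} (h : LcAdj c p q) : LcAdj c q p :=
  fun n hn => Or.symm (h n (by rwa [max_comm]))

lemma lift_adj {c : ℕ → ℕ} (hodd : ∀ n, Odd (c n)) {N : ℕ} {u v : List ℕ}
    (h : (u, v) ∈ LEdges c N) (z : ℕ → Bool) : LcAdj c (Pt N z u) (Pt N z v) := by
  obtain ⟨hgu, hgv, -⟩ := edge_props hodd h
  obtain ⟨a, u₁, rfl⟩ := List.exists_cons_of_ne_nil hgu.1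
  obtain ⟨b, v₁, rfl⟩ := List.exists_cons_of_ne_nil hgv.1
  have hul : u₁.length + 1 ≤ N + 1 := by simpa using hgu.2.1
  have hvl : v₁.length + 1 ≤ N + 1 := by simpa using hgv.2.1
  have hubin : ∀ x ∈ u₁, x ≤ 1 := by simpa using hgu.2.2.1
  have hvbin : ∀ x ∈ v₁, x ≤ 1 := by simpa using hgv.2.2.1
  intro n hn
  simp only [Pt, List.length_cons, List.headI_cons, List.tail_cons, max_le_iff] at hn ⊢
  have hmu : N + 1 - (u₁.length + 1) = N - u₁.length := by omega
  have hmv : N + 1 - (v₁.length + 1) = N - v₁.length := by omega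
  rw [hmu, hmv] at hn ⊢
  by_cases hN : N ≤ n
  · -- upper regime: copy the edge upwards
    have eu : n = (N - u₁.length) + ((bools u₁).length + (n - N)) := by
      simp only [bools, List.length_map]; omega
    have ev : n = (N - v₁.length) + ((bools v₁).length + (n - N)) := by
      simp only [bools, List.length_map]; omega
    rw [show piProj (N - u₁.length) a (catSeq (bools u₁) z) n
        = piProj (N - u₁.length) a (catSeq (bools u₁) z)
          ((N - u₁.length) + ((bools u₁).length + (n - N))) from by rw [← eu],
      show piProj (N - v₁.length) b (catSeq (bools v₁) z) n
        = piProj (N - v₁.length) b (catSeq (bools v₁) z)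
          ((N - v₁.length) + ((bools v₁).length + (n - N))) from by rw [← ev],
      piProj_cat, piProj_cat, nb_bools u₁ hubin, nb_bools v₁ hvbin]
    left
    have := copy_many h z (n - N)
    rw [show N + (n - N) = n from by omega] at this
    simpa using this
  · -- lower regime: truncate the edge downwards
    have hdu : N - n ≤ u₁.length := by omega
    have hdv : N - n ≤ v₁.length := by omega
    have eu : n = (N - u₁.length) + (n - (N - u₁.length)) := by omega
    have ev : n = (N - v₁.length) + (n - (N - v₁.length)) := by omega
    rw [show piProj (N - u₁.length) a (catSeq (bools u₁) z) n
        = piProj (N - u₁.length) a (catSeq (bools u₁) z)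
          ((N - u₁.length) + (n - (N - u₁.length))) from by rw [← eu],
      show piProj (N - v₁.length) b (catSeq (bools v₁) z) n
        = piProj (N - v₁.length) b (catSeq (bools v₁) z)
          ((N - v₁.length) + (n - (N - v₁.length))) from by rw [← ev],
      piProj_take _ _ _ _ _ (by simp only [bools, List.length_map]; omega),
      piProj_take _ _ _ _ _ (by simp only [bools, List.length_map]; omega)]
    have := trunc_many (N - n) h (by simp; omega) (by simp; omega) (by omega)
    rw [show N - (N - n) = n from by omega] at this
    simp only [List.length_cons] at this
    rw [show u₁.length + 1 - (N - n) = (u₁.length - (N - n)) + 1 from by omega,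
      show v₁.length + 1 - (N - n) = (v₁.length - (N - n)) + 1 from by omega,
      List.take_succ_cons, List.take_succ_cons] at this
    left
    have etu : (bools u₁).take (n - (N - u₁.length)) = bools (u₁.take (u₁.length - (N - n))) := by
      rw [show n - (N - u₁.length) = u₁.length - (N - n) from by omega]
      simp [bools, List.map_take]
    have etv : (bools v₁).take (n - (N - v₁.length)) = bools (v₁.take (v₁.length - (N - n))) := by
      rw [show n - (N - v₁.length) = v₁.length - (N - n) from by omega]
      simp [bools, List.map_take]
    rw [etu, etv, nb_bools _ (fun x hx => hubin x (List.mem_of_mem_take hx)),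
      nb_bools _ (fun x hx => hvbin x (List.mem_of_mem_take hx))]
    exact this

lemma lift_step {c : ℕ → ℕ} (hodd : ∀ n, Odd (c n)) {N : ℕ} (z : ℕ → Bool) {u v : List ℕ}
    (h : LAdj c N u v) :
    Pt N z u ∈ Xc c ∧ Pt N z v ∈ Xc c ∧ LcAdj c (Pt N z u) (Pt N z v) := by
  rcases h with h | h
  · obtain ⟨hgu, hgv, -⟩ := edge_props hodd h
    exact ⟨good_mem_Xc z hgu, good_mem_Xc z hgv, lift_adj hodd h z⟩
  · obtain ⟨hgv, hgu, -⟩ := edge_props hodd h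
    exact ⟨good_mem_Xc z hgu, good_mem_Xc z hgv, LcAdj_symm (lift_adj hodd h z)⟩
lemma pathEnd_mem (c : ℕ → ℕ) : ∀ n i, i ≤ 1 → pathEnd n i ∈ LVerts c n := by
  intro n
  induction n with
  | zero => intro i _; simp [pathEnd, LVerts]
  | succ n ih =>
    intro i hi
    rw [pathEnd_succ]
    interval_cases i
    · exact Or.inl (Or.inl ⟨pathEnd n 0, ih 0 (by omega), rfl⟩)
    · exact Or.inl (Or.inr ⟨pathEnd n 0, ih 0 (by omega), rfl⟩)

lemma edge_bridge0 {c : ℕ → ℕ} (n : ℕ) : (pathEnd n 1 ++ [0], ([0] : List ℕ)) ∈ LEdges c (n+1) :=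
  Or.inl (Or.inr (Or.inl rfl))

lemma edge_bridge1 {c : ℕ → ℕ} (n : ℕ) : (([c n] : List ℕ), pathEnd n 1 ++ [1]) ∈ LEdges c (n+1) :=
  Or.inl (Or.inr (Or.inr rfl))

lemma walk_up {c : ℕ → ℕ} {n p q : ℕ} (hpq : p ≤ q) (hq : q ≤ c n) :
    (q - p) ∈ walkLens (LAdj c (n+1)) [p] [q] := by
  obtain ⟨d, rfl⟩ : ∃ d, q = p + d := ⟨q - p, by omega⟩
  rw [show p + d - p = d from by omega]
  refine ⟨fun j => [p + min j d], by simp, by simp, fun j hj => ?_⟩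
  show LAdj c (n+1) [p + min j d] [p + min (j+1) d]
  rw [show min j d = j from by omega, show min (j+1) d = j + 1 from by omega]
  exact Or.inl (Or.inr ⟨p + j, by omega, rfl⟩)

lemma walk_down {c : ℕ → ℕ} {n p q : ℕ} (hqp : q ≤ p) (hp : p ≤ c n) :
    (p - q) ∈ walkLens (LAdj c (n+1)) [p] [q] := by
  have := walkLens_symm (A := LAdj c (n+1)) (fun x y h => Or.symm h) (walk_up hqp hp)
  simpa using this

lemma walk_copy {c : ℕ → ℕ} {n i : ℕ} (hi : i ≤ 1) {a : ℕ} {x y : List ℕ}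
    (ha : a ∈ walkLens (LAdj c n) x y) :
    a ∈ walkLens (LAdj c (n+1)) (x ++ [i]) (y ++ [i]) := by
  refine walkLens_map (f := fun l => l ++ [i]) ?_ ha
  intro x' y' h
  rcases h with h | h
  · exact Or.inl (copy_edge h hi)
  · exact Or.inr (copy_edge h hi)

lemma cross0 {c : ℕ → ℕ} (n : ℕ) :
    ∃ ℓ, ℓ ∈ walkLens (LAdj c (n+1)) (pathEnd n 1 ++ [0]) (pathEnd n 1 ++ [1]) :=
  ⟨1 + (c n - 0) + 1,
    walkLens_trans (walkLens_trans (walkLens_single (Or.inl (edge_bridge0 n)))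
      (walk_up (Nat.zero_le _) le_rfl)) (walkLens_single (Or.inl (edge_bridge1 n)))⟩

lemma fromP {c : ℕ → ℕ} {n p : ℕ} (hp : p ≤ c n) {i : ℕ} (hi : i ≤ 1) :
    ∃ ℓ, ℓ ∈ walkLens (LAdj c (n+1)) [p] (pathEnd n 1 ++ [i]) := by
  interval_cases i
  · exact ⟨(p - 0) + 1, walkLens_trans (walk_down (Nat.zero_le _) hp)
      (walkLens_single (Or.inr (edge_bridge0 n)))⟩
  · exact ⟨(c n - p) + 1, walkLens_trans (walk_up hp le_rfl)
      (walkLens_single (Or.inl (edge_bridge1 n)))⟩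

lemma walkExists (c : ℕ → ℕ) :
    ∀ n v, v ∈ LVerts c n → ∀ i, i ≤ 1 → ∃ ℓ, ℓ ∈ walkLens (LAdj c n) v (pathEnd n i) := by
  intro n
  induction n with
  | zero =>
    intro v hv i _
    rw [show v = [0] from hv]
    exact ⟨0, walkLens_zero _⟩
  | succ n ih =>
    intro v hv i hi
    have toEnd : ∀ j ≤ 1, ∃ ℓ, ℓ ∈ walkLens (LAdj c (n+1)) (pathEnd n 1 ++ [j])
        (pathEnd (n+1) j) := by
      intro j hj
      obtain ⟨ℓ, hℓ⟩ := ih (pathEnd n 1) (pathEnd_mem c n 1 le_rfl) 0 (by omega)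
      exact ⟨ℓ, by rw [pathEnd_succ]; exact walk_copy hj hℓ⟩
    have cross : ∀ j ≤ 1, ∀ i' ≤ 1, ∃ ℓ, ℓ ∈ walkLens (LAdj c (n+1))
        (pathEnd n 1 ++ [j]) (pathEnd n 1 ++ [i']) := by
      intro j hj i' hi'
      interval_cases j <;> interval_cases i'
      · exact ⟨0, walkLens_zero _⟩
      · exact cross0 n
      · obtain ⟨ℓ, hℓ⟩ := cross0 (c := c) n
        exact ⟨ℓ, walkLens_symm (fun x y h => Or.symm h) hℓ⟩
      · exact ⟨0, walkLens_zero _⟩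
    rcases hv with (⟨u, hu, rfl⟩ | ⟨u, hu, rfl⟩) | ⟨p, hp, rfl⟩
    · by_cases hij : i = 0
      · subst hij
        obtain ⟨ℓ, hℓ⟩ := ih u hu 0 (by omega)
        exact ⟨ℓ, by rw [pathEnd_succ]; exact walk_copy (by omega) hℓ⟩
      · have hi1 : i = 1 := by omega
        subst hi1
        obtain ⟨ℓ1, hℓ1⟩ := ih u hu 1 le_rfl
        obtain ⟨ℓ2, hℓ2⟩ := cross 0 (by omega) 1 le_rfl
        obtain ⟨ℓ3, hℓ3⟩ := toEnd 1 le_rfl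
        exact ⟨ℓ1 + ℓ2 + ℓ3, walkLens_trans (walkLens_trans (walk_copy (by omega) hℓ1) hℓ2) hℓ3⟩
    · by_cases hij : i = 1
      · subst hij
        obtain ⟨ℓ, hℓ⟩ := ih u hu 0 (by omega)
        exact ⟨ℓ, by rw [pathEnd_succ]; exact walk_copy le_rfl hℓ⟩
      · have hi0 : i = 0 := by omega
        subst hi0
        obtain ⟨ℓ1, hℓ1⟩ := ih u hu 1 le_rfl
        obtain ⟨ℓ2, hℓ2⟩ := cross 1 le_rfl 0 (by omega)
        obtain ⟨ℓ3, hℓ3⟩ := toEnd 0 (by omega)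
        exact ⟨ℓ1 + ℓ2 + ℓ3, walkLens_trans (walkLens_trans (walk_copy le_rfl hℓ1) hℓ2) hℓ3⟩
    · obtain ⟨ℓ1, hℓ1⟩ := fromP hp hi
      obtain ⟨ℓ2, hℓ2⟩ := toEnd i hi
      exact ⟨ℓ1 + ℓ2, walkLens_trans hℓ1 hℓ2⟩
lemma chi_LAdj {c : ℕ → ℕ} (hodd : ∀ n, Odd (c n)) {n : ℕ} {u v : List ℕ}
    (h : LAdj c n u v) : chi n u ≠ chi n v := by
  rcases h with h | h
  · exact (edge_props hodd h).2.2
  · exact (edge_props hodd h).2.2.symm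

lemma zmod2_ne {a b : ZMod 2} (h : a ≠ b) : b = a + 1 := by revert h; revert a b; decide

lemma append_mem_LVerts {c : ℕ → ℕ} :
    ∀ (s : List Bool) {n : ℕ} {v : List ℕ}, v ∈ LVerts c n →
      v ++ nb s ∈ LVerts c (n + s.length) := by
  intro s
  induction s with
  | nil => intro n v hv; simpa [nb] using hv
  | cons b s ih =>
    intro n v hv
    have h1 : v ++ [cond b 1 0] ∈ LVerts c (n + 1) := by
      cases b
      · exact Or.inl (Or.inl ⟨v, hv, rfl⟩)
      · exact Or.inl (Or.inr ⟨v, hv, rfl⟩)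
    have h2 := ih h1
    rw [show v ++ nb (b :: s) = (v ++ [cond b 1 0]) ++ nb s from by simp [nb],
      show n + (b :: s).length = (n + 1) + s.length from by simp; omega]
    exact h2

lemma singleton_mem_LVerts {c : ℕ → ℕ} {m k : ℕ}
    (hmk : (m = 0 ∧ k = 0) ∨ (1 ≤ m ∧ k ≤ c (m - 1))) : [k] ∈ LVerts c m := by
  rcases hmk with ⟨rfl, rfl⟩ | ⟨hm, hk⟩
  · simp [LVerts]
  · obtain ⟨m', rfl⟩ : ∃ m', m = m' + 1 := ⟨m - 1, by omega⟩
    exact Or.inr ⟨k, by simpa using hk, rfl⟩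

lemma Pt_endpoint (m k : ℕ) (t : List Bool) (b : Bool) (y : ℕ → Bool) :
    Pt (m + t.length + 1) y ((k :: nb t) ++ [cond b 1 0]) = (m, k, catSeq (t ++ [b]) y) := by
  have h1 : (k :: nb t) ++ [cond b 1 0] = k :: nb (t ++ [b]) := by simp [nb]
  rw [h1]
  rw [show Pt (m + t.length + 1) y (k :: nb (t ++ [b]))
      = (m + t.length + 1 + 1 - (k :: nb (t ++ [b])).length, k,
        catSeq (bools (nb (t ++ [b]))) y) from rfl, bools_nb]
  rw [Prod.ext_iff]
  refine ⟨?_, rfl⟩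
  simp only [List.length_cons, nb, List.length_map, List.length_append, List.length_singleton,
    List.length_nil]
  omega

lemma allOdd {c : ℕ → ℕ} (hodd : ∀ n, Odd (c n)) (m k : ℕ) (t : List Bool) (y : ℕ → Bool)
    {ℓ : ℕ} (hℓ : ℓ ∈ walkLens (fun a b => a ∈ Xc c ∧ b ∈ Xc c ∧ LcAdj c a b)
      (m, k, catSeq (t ++ [false]) y) (m, k, catSeq (t ++ [true]) y)) : Odd ℓ := by
  obtain ⟨w, hw0, hwl, hw⟩ := hℓ
  set N := max (m + ((t ++ [false]).length)) ((Finset.range (ℓ+1)).sup fun j => (w j).1) with hN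
  have hNw : ∀ j, j ≤ ℓ → (w j).1 ≤ N := by
    intro j hj
    exact le_max_of_le_right
      (Finset.le_sup (f := fun j => (w j).1) (Finset.mem_range.2 (by omega)))
  have hNm : m + (t ++ [false]).length ≤ N := le_max_left _ _
  simp only [List.length_append, List.length_singleton] at hNm
  have total : ∀ j, j ≤ ℓ →
      chi N (piProj (w j).1 (w j).2.1 (w j).2.2 N)
        = chi N (piProj (w 0).1 (w 0).2.1 (w 0).2.2 N) + (j : ZMod 2) := by
    intro j
    induction j with
    | zero => intro _; simp
    | succ j ihj =>
      intro hj
      have hadj := (hw j (by omega)).2.2 N (max_le (hNw j (by omega)) (hNw (j+1) (by omega)))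
      have hne := chi_LAdj hodd hadj
      rw [zmod2_ne hne, ihj (by omega)]
      push_cast
      ring
  have hfin := total ℓ le_rfl
  rw [hw0, hwl] at hfin
  -- compute the chi values of the two endpoints
  set d := N - m - (t.length + 1) with hd
  set Z := List.ofFn fun j : Fin d => cond (y j.val) 1 0 with hZ
  have eN : ∀ b : Bool, N = m + ((t ++ [b]).length + d) := by
    intro b; simp; omega
  have e0 : piProj m k (catSeq (t ++ [false]) y) N = k :: (nb (t ++ [false]) ++ Z) := by
    rw [show piProj m k (catSeq (t ++ [false]) y) N
        = piProj m k (catSeq (t ++ [false]) y) (m + ((t ++ [false]).length + d)) from by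
          rw [← eN false]]
    exact piProj_cat m k d (t ++ [false]) y
  have e1 : piProj m k (catSeq (t ++ [true]) y) N = k :: (nb (t ++ [true]) ++ Z) := by
    rw [show piProj m k (catSeq (t ++ [true]) y) N
        = piProj m k (catSeq (t ++ [true]) y) (m + ((t ++ [true]).length + d)) from by
          rw [← eN true]]
    exact piProj_cat m k d (t ++ [true]) y
  rw [e0, e1] at hfin
  have echi : chi N (k :: (nb (t ++ [true]) ++ Z))
      = chi N (k :: (nb (t ++ [false]) ++ Z)) + 1 := by
    simp only [chi, List.headI_cons, List.tail_cons, List.sum_append, List.length_cons,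
      List.length_append, nb, List.map_append, List.length_map, List.map_cons, List.map_nil,
      List.sum_cons, List.sum_nil, cond_true, cond_false, List.length_nil]
    push_cast
    ring
  rw [echi] at hfin
  have hcast : (ℓ : ZMod 2) = 1 := by
    have := hfin
    have h2 : chi N (k :: (nb (t ++ [false]) ++ Z)) + 1
        = chi N (k :: (nb (t ++ [false]) ++ Z)) + (ℓ : ZMod 2) := this
    exact (add_left_cancel h2).symm
  rcases Nat.even_or_odd ℓ with he | ho
  · exfalso
    rw [← ZMod.natCast_mod ℓ 2, Nat.even_iff.mp he] at hcast
    exact absurd hcast (by decide)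
  · exact ho
/-- If `c` takes only odd values and `(m,k,·)` are admissible coordinates for
`X_c`, then for any finite binary string `t` and `y ∈ 2^ℕ`, the vertices
`(m,k,t^⌢(0)^⌢y)` and `(m,k,t^⌢(1)^⌢y)` of `X_c` lie in the same connected
component of `𝕃_c` and are at odd graph distance in `𝕃_c`. -/
theorem stmt16 (c : ℕ → ℕ) (hodd : ∀ n, Odd (c n)) (m k : ℕ)
    (hmk : (m = 0 ∧ k = 0) ∨ (1 ≤ m ∧ k ≤ c (m - 1)))
    (t : List Bool) (y : ℕ → Bool) :
    (walkLens (fun a b => a ∈ Xc c ∧ b ∈ Xc c ∧ LcAdj c a b)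
        (m, k, catSeq (t ++ [false]) y) (m, k, catSeq (t ++ [true]) y)).Nonempty ∧
    Odd (sInf (walkLens (fun a b => a ∈ Xc c ∧ b ∈ Xc c ∧ LcAdj c a b)
        (m, k, catSeq (t ++ [false]) y) (m, k, catSeq (t ++ [true]) y))) := by
  have hex : (walkLens (fun a b => a ∈ Xc c ∧ b ∈ Xc c ∧ LcAdj c a b)
      (m, k, catSeq (t ++ [false]) y) (m, k, catSeq (t ++ [true]) y)).Nonempty := by
    have hv : k :: nb t ∈ LVerts c (m + t.length) := by
      have := append_mem_LVerts t (singleton_mem_LVerts (c := c) hmk)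
      simpa using this
    obtain ⟨a, ha⟩ := walkExists c (m + t.length) (k :: nb t) hv 1 le_rfl
    have h0 : a ∈ walkLens (LAdj c (m + t.length + 1))
        ((k :: nb t) ++ [0]) (pathEnd (m + t.length) 1 ++ [0]) :=
      walk_copy (by omega) ha
    have h1 : a ∈ walkLens (LAdj c (m + t.length + 1))
        ((k :: nb t) ++ [1]) (pathEnd (m + t.length) 1 ++ [1]) :=
      walk_copy le_rfl ha
    obtain ⟨b, hb⟩ := cross0 (c := c) (m + t.length)
    have h1s := walkLens_symm (fun x y h => Or.symm h) h1
    have hfull := walkLens_trans (walkLens_trans h0 hb) h1s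
    have hlift := walkLens_map (B := fun a b => a ∈ Xc c ∧ b ∈ Xc c ∧ LcAdj c a b) (f := Pt (m + t.length + 1) y)
      (fun x x' h => lift_step hodd y h) hfull
    rw [show ((k :: nb t) ++ [0] : List ℕ) = (k :: nb t) ++ [cond false 1 0] from rfl,
        show ((k :: nb t) ++ [1] : List ℕ) = (k :: nb t) ++ [cond true 1 0] from rfl,
        Pt_endpoint, Pt_endpoint] at hlift
    exact ⟨_, hlift⟩
  exact ⟨hex, allOdd hodd m k t y (Nat.sInf_mem hex)⟩
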